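/- Forest similarity and tree edit distance are complementary: sim(F, F') = Σ_{v ∈ F} δ(v, ε) + Σ_{v' ∈ F'} δ(ε, v') - ed(F, F'), where ed is the tree edit distance with cost function δ and η(v,v') := δ(v,ε) + δ(ε,v') - δ(v,v'). -/

import Mathlib

namespace Stmt11

/-- A rooted ordered tree with labels in `α`. -/
inductive LTree (α : Type*) : Type _ where
  | node : α → List (LTree α) → LTree α

/-- An ordered forest. -/
abbrev LForest (α : Type*) := List (LTree α)

mutual
/-- Number of nodes of a tree. -/
def sizeT {α : Type*} : LTree α → ℕ
  | .node _ ts => 1 + sizeF ts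
/-- Number of nodes of a forest. -/
def sizeF {α : Type*} : LForest α → ℕ
  | [] => 0
  | t :: ts => sizeT t + sizeF ts
end

/-- The label of the node of `F` at address `p` (a path of child indices),
if it exists. -/
def labelAt {α : Type*} : LForest α → List ℕ → Option α
  | _, [] => none
  | ts, i :: p =>
    match ts[i]? with
    | none => none
    | some (.node a us) => if p = [] then some a else labelAt us p
termination_by _ p => p.length

/-- `p` is (the address of) a node of the forest `F`. -/
def IsNode {α : Type*} (F : LForest α) (p : List ℕ) : Prop := (labelAt F p).isSome

/-- Two matched pairs of node addresses are compatible: distinct nodes,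
ancestor (address-prefix) relations preserved in both directions, and for
incomparable nodes the pre-order (lexicographic) order is preserved. -/
def Compat (pp qq : List ℕ × List ℕ) : Prop :=
  pp.1 ≠ qq.1 ∧ pp.2 ≠ qq.2 ∧
  (pp.1 <+: qq.1 ↔ pp.2 <+: qq.2) ∧
  (qq.1 <+: pp.1 ↔ qq.2 <+: pp.2) ∧
  (List.Lex (· < ·) pp.1 qq.1 ↔ List.Lex (· < ·) pp.2 qq.2)

/-- A valid similarity mapping between the forests `F` and `F'`. -/
def IsMappingF {α : Type*} (F F' : LForest α) (M : List (List ℕ × List ℕ)) : Prop :=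
  (∀ pr ∈ M, IsNode F pr.1 ∧ IsNode F' pr.2) ∧ M.Pairwise Compat

/-- Total weight of a mapping under the weight function `η` on labels. -/
def wtF {α : Type*} [Inhabited α] (η : α → α → ℤ) (F F' : LForest α)
    (M : List (List ℕ × List ℕ)) : ℤ :=
  (M.map (fun pr =>
    η ((labelAt F pr.1).getD default) ((labelAt F' pr.2).getD default))).sum

/-- The set of achievable mapping weights; its greatest element is the forest
similarity `sim(F, F')`. -/
def simSetF {α : Type*} [Inhabited α] (η : α → α → ℤ) (F F' : LForest α) : Set ℤ :=
  {s | ∃ M, IsMappingF F F' M ∧ s = wtF η F F' M}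

theorem sizeF_append {α : Type*} (xs ys : LForest α) :
    sizeF (xs ++ ys) = sizeF xs + sizeF ys := by
  induction xs with
  | nil => simp [sizeF]
  | cons t ts ih => simp [sizeF, ih]; omega

/-- The tree edit distance between two ordered forests, defined by the
standard recurrence: delete the leftmost root (reattaching its children),
insert the leftmost root of the other forest, or match the two leftmost roots. -/
def fed {α : Type*} (δ : α → α → ℤ) (δdel δins : α → ℤ) : LForest α → LForest α → ℤ
  | [], [] => 0
  | .node a ts :: rest, [] => δdel a + fed δ δdel δins (ts ++ rest) []
  | [], .node b us :: rest' => δins b + fed δ δdel δins [] (us ++ rest')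
  | .node a ts :: rest, .node b us :: rest' =>
      min (δ a b + fed δ δdel δins ts us + fed δ δdel δins rest rest')
        (min (δdel a + fed δ δdel δins (ts ++ rest) (.node b us :: rest'))
             (δins b + fed δ δdel δins (.node a ts :: rest) (us ++ rest')))
termination_by F G => sizeF F + sizeF G
decreasing_by all_goals (simp [sizeF, sizeT, sizeF_append] <;> omega)

mutual
/-- Sum of a cost `c` over all node labels of a tree. -/
def sumCostT {α : Type*} (c : α → ℤ) : LTree α → ℤ
  | .node a ts => c a + sumCostF c ts
/-- Sum of a cost `c` over all node labels of a forest. -/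
def sumCostF {α : Type*} (c : α → ℤ) : LForest α → ℤ
  | [] => 0
  | t :: ts => sumCostT c t + sumCostF c ts
end

/-!
Both sides satisfy the same recurrence on the leftmost roots. Subtracting the edit-distance
recurrence `fed` from the total deletion and insertion cost turns each `min` into a `max` and
`δ a b` into `η a b`, giving `simRec`: either match the two leftmost roots (and recurse on their
children and on the remaining trees), or leave one of them unmatched (splicing its children into
its place). So it remains to show that `simRec` is the largest weight of a mapping.

Each of these decompositions comes with a map between node addresses that preserves labels,
prefixes and the lexicographic (pre-)order, so mappings can be transported along it in both
directions. The only step that is not bookkeeping is that if both leftmost roots are mapped at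
all, they are mapped to each other: the leftmost root is an ancestor or a predecessor of every
other node, and a mapping must preserve that.
-/

theorem append_lt_append_of_lt_of_not_prefix {α : Type*} [LT α] {s t : List α} (h : s < t)
    (hst : ¬ s <+: t) (p q : List α) : s ++ p < t ++ q := by
  rw [← List.lex_lt] at h ⊢
  induction h with
  | nil => exact absurd List.nil_prefix hst
  | cons _ ih => exact List.Lex.cons (ih fun h => hst (List.cons_prefix_cons.2 ⟨rfl, h⟩))
  | rel h => exact List.Lex.rel h

theorem append_lt_append_left_iff {α : Type*} [Preorder α] (s : List α) {p q : List α} :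
    s ++ p < s ++ q ↔ p < q := by
  induction s with
  | nil => rfl
  | cons a s ih => simp [ih]

theorem nil_lt_iff {α : Type*} [LT α] {p : List α} : [] < p ↔ p ≠ [] := by
  cases p <;> simp [List.nil_lt_cons, List.not_lt_nil]

theorem lt_singleton_zero_iff {p : List ℕ} : p < [0] ↔ p = [] := by
  cases p with
  | nil => simp [List.nil_lt_cons]
  | cons i p => simp [List.cons_lt_cons_iff, List.not_lt_nil]

theorem singleton_zero_prefix_or_lt {p : List ℕ} (hp : p ≠ []) : [0] <+: p ∨ [0] < p := by
  obtain ⟨_ | i, p, rfl⟩ := List.exists_cons_of_ne_nil hp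
  · simp
  · simp [List.cons_lt_cons_iff]

structure IsAddrCode (c : ℕ → List ℕ) : Prop where
  strictMono : StrictMono c
  eq_of_prefix : ∀ {i j}, c i <+: c j → i = j

def codeCone (c : ℕ → List ℕ) : Set (List ℕ) := {p | ∃ i q, p = c i ++ q}

namespace IsAddrCode

variable {c : ℕ → List ℕ}

theorem eq_of_prefix_append (hc : IsAddrCode c) {i j : ℕ} {q : List ℕ} (h : c i <+: c j ++ q) :
    i = j := by
  rcases List.prefix_or_prefix_of_prefix h (List.prefix_append _ _) with h | h
  · exact hc.eq_of_prefix h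
  · exact (hc.eq_of_prefix h).symm

theorem append_prefix_append_iff (hc : IsAddrCode c) {i j : ℕ} {p q : List ℕ} :
    c i ++ p <+: c j ++ q ↔ i = j ∧ p <+: q := by
  refine ⟨fun h => ?_, fun ⟨hij, h⟩ => hij ▸ (List.prefix_append_right_inj _).2 h⟩
  obtain rfl := hc.eq_of_prefix_append ((List.prefix_append _ _).trans h)
  exact ⟨rfl, (List.prefix_append_right_inj _).1 h⟩

theorem append_inj_iff (hc : IsAddrCode c) {i j : ℕ} {p q : List ℕ} :
    c i ++ p = c j ++ q ↔ i = j ∧ p = q := by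
  refine ⟨fun h => ?_, fun ⟨hij, h⟩ => hij ▸ h ▸ rfl⟩
  obtain rfl := hc.eq_of_prefix_append (h ▸ List.prefix_append _ _)
  exact ⟨rfl, List.append_cancel_left h⟩

theorem append_lt_append_iff (hc : IsAddrCode c) {i j : ℕ} {p q : List ℕ} :
    c i ++ p < c j ++ q ↔ i < j ∨ i = j ∧ p < q := by
  have hlt : ∀ {i j : ℕ} (p q : List ℕ), i < j → c i ++ p < c j ++ q := fun p q hij =>
    append_lt_append_of_lt_of_not_prefix (hc.strictMono hij)
      (fun h => hij.ne (hc.eq_of_prefix h)) p q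
  rcases lt_trichotomy i j with hij | rfl | hij
  · simp [hij, hlt p q hij]
  · simp [append_lt_append_left_iff]
  · simp [hij.not_gt, hij.ne', (hlt q p hij).not_gt]

end IsAddrCode

def IsAddrEmbOn (f : List ℕ → List ℕ) (P : Set (List ℕ)) : Prop :=
  ∀ ⦃p⦄, p ∈ P → ∀ ⦃q⦄, q ∈ P →
    (f p = f q ↔ p = q) ∧ (f p <+: f q ↔ p <+: q) ∧ (f p < f q ↔ p < q)

theorem isAddrEmbOn_id : IsAddrEmbOn id Set.univ := fun _ _ _ _ => ⟨Iff.rfl, Iff.rfl, Iff.rfl⟩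

theorem IsAddrCode.isAddrEmbOn {c d : ℕ → List ℕ} (hc : IsAddrCode c) (hd : IsAddrCode d)
    {f : List ℕ → List ℕ} (hf : ∀ i q, f (c i ++ q) = d i ++ q) :
    IsAddrEmbOn f (codeCone c) := by
  rintro _ ⟨i, p, rfl⟩ _ ⟨j, q, rfl⟩
  simp only [hf, hc.append_inj_iff, hd.append_inj_iff, hc.append_prefix_append_iff,
    hd.append_prefix_append_iff, hc.append_lt_append_iff, hd.append_lt_append_iff, and_self]

def rootCode : ℕ → List ℕ := fun i => [i]

def childCode : ℕ → List ℕ := fun i => [0, i]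

def succCode : ℕ → List ℕ := fun i => [i + 1]

/-- `spliceCode ts.length i` is the address in `node a ts :: rest` of the `i`-th root of
`ts ++ rest`. -/
def spliceCode (n : ℕ) : ℕ → List ℕ := fun i => if i < n then [0, i] else [i - n + 1]

theorem isAddrCode_rootCode : IsAddrCode rootCode :=
  ⟨fun _ _ h => by simp [rootCode, List.cons_lt_cons_iff, h],
    fun h => by simpa [rootCode] using h⟩

theorem isAddrCode_childCode : IsAddrCode childCode :=
  ⟨fun _ _ h => by simp [childCode, List.cons_lt_cons_iff, h],
    fun h => by simpa [childCode] using h⟩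

theorem isAddrCode_succCode : IsAddrCode succCode :=
  ⟨fun _ _ h => by simp [succCode, List.cons_lt_cons_iff, h],
    fun h => by simpa [succCode] using h⟩

theorem isAddrCode_spliceCode (n : ℕ) : IsAddrCode (spliceCode n) := by
  refine ⟨fun i j h => ?_, fun {i j} h => ?_⟩
  · by_cases hi : i < n <;> by_cases hj : j < n <;>
      simp [spliceCode, hi, hj, List.cons_lt_cons_iff] <;> omega
  · by_cases hi : i < n <;> by_cases hj : j < n <;>
      simp [spliceCode, hi, hj] at h <;> omega

section Forests

variable {α : Type*}

theorem labelAt_cons (F : LForest α) (i : ℕ) (p : List ℕ) :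
    labelAt F (i :: p) = match F[i]? with
      | none => none
      | some (.node a us) => if p = [] then some a else labelAt us p := by
  rw [labelAt]

@[simp] theorem labelAt_nil (F : LForest α) : labelAt F [] = none := by
  simp [labelAt]

@[simp] theorem labelAt_nil_forest (p : List ℕ) : labelAt ([] : LForest α) p = none := by
  cases p <;> simp [labelAt]

@[simp] theorem labelAt_node_cons_zero (a : α) (ts rest : LForest α) :
    labelAt (.node a ts :: rest) [0] = some a := by
  simp [labelAt_cons]

@[simp] theorem labelAt_node_cons_zero_cons (a : α) (ts rest : LForest α) (i : ℕ)
    (p : List ℕ) :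
    labelAt (.node a ts :: rest) (0 :: i :: p) = labelAt ts (i :: p) := by
  simp [labelAt_cons]

@[simp] theorem labelAt_cons_succ (t : LTree α) (rest : LForest α) (i : ℕ) (p : List ℕ) :
    labelAt (t :: rest) ((i + 1) :: p) = labelAt rest (i :: p) := by
  simp [labelAt_cons]

theorem labelAt_append_of_lt (xs ys : LForest α) {i : ℕ} (h : i < xs.length) (p : List ℕ) :
    labelAt (xs ++ ys) (i :: p) = labelAt xs (i :: p) := by
  rw [labelAt_cons, labelAt_cons, List.getElem?_append_left h]

theorem labelAt_append_of_le (xs ys : LForest α) {i : ℕ} (h : xs.length ≤ i) (p : List ℕ) :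
    labelAt (xs ++ ys) (i :: p) = labelAt ys ((i - xs.length) :: p) := by
  rw [labelAt_cons, labelAt_cons, List.getElem?_append_right h]

theorem labelAt_node_cons_spliceCode_append (a : α) (ts rest : LForest α) (i : ℕ)
    (q : List ℕ) :
    labelAt (.node a ts :: rest) (spliceCode ts.length i ++ q) = labelAt (ts ++ rest) (i :: q) := by
  by_cases h : i < ts.length
  · simp [spliceCode, h, labelAt_append_of_lt]
  · simp [spliceCode, h, labelAt_append_of_le _ _ (not_lt.1 h)]

theorem IsNode.ne_nil {F : LForest α} {p : List ℕ} (h : IsNode F p) : p ≠ [] := by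
  rintro rfl
  simp [IsNode] at h

theorem IsNode.mem_codeCone_rootCode {F : LForest α} {p : List ℕ} (h : IsNode F p) :
    p ∈ codeCone rootCode := by
  obtain ⟨i, q, rfl⟩ := List.exists_cons_of_ne_nil h.ne_nil
  exact ⟨i, q, rfl⟩

theorem IsNode.lt_length {F : LForest α} {i : ℕ} {p : List ℕ} (h : IsNode F (i :: p)) :
    i < F.length := by
  by_contra hi
  simp [IsNode, labelAt_cons, List.getElem?_eq_none (not_lt.1 hi)] at h

theorem IsNode.mem_codeCone_spliceCode {a : α} {ts rest : LForest α} {p : List ℕ}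
    (h : IsNode (.node a ts :: rest) p) (hp : p ≠ [0]) :
    p ∈ codeCone (spliceCode ts.length) := by
  obtain ⟨_ | j, q, rfl⟩ := List.exists_cons_of_ne_nil h.ne_nil
  · obtain ⟨i, q, rfl⟩ := List.exists_cons_of_ne_nil (by simpa using hp)
    have hi : i < ts.length := IsNode.lt_length (p := q) (by simpa [IsNode] using h)
    exact ⟨i, q, by simp [spliceCode, hi]⟩
  · exact ⟨j + ts.length, q, by simp [spliceCode]⟩

def unspliceAddr (n : ℕ) : List ℕ → List ℕ
  | [] => []
  | i :: p => spliceCode n i ++ p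

def spliceAddr (n : ℕ) : List ℕ → List ℕ
  | 0 :: i :: p => i :: p
  | (j + 1) :: p => (j + n) :: p
  | p => p

theorem spliceAddr_spliceCode_append (n i : ℕ) (q : List ℕ) :
    spliceAddr n (spliceCode n i ++ q) = i :: q := by
  by_cases h : i < n
  · simp [spliceCode, spliceAddr, h]
  · simp only [spliceCode, h, if_false, List.cons_append, List.nil_append, spliceAddr]
    congr 1
    omega

structure IsNodeEmbOn (F G : LForest α) (f : List ℕ → List ℕ) (P : Set (List ℕ)) :
    Prop where
  isAddrEmbOn : IsAddrEmbOn f P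
  labelAt_eq : ∀ p ∈ P, IsNode F p → labelAt G (f p) = labelAt F p

theorem isNodeEmbOn_id (F : LForest α) : IsNodeEmbOn F F id Set.univ :=
  ⟨isAddrEmbOn_id, fun _ _ _ => rfl⟩

theorem isNodeEmbOn_cons_zero (a : α) (ts rest : LForest α) :
    IsNodeEmbOn ts (.node a ts :: rest) (0 :: ·) (codeCone rootCode) where
  isAddrEmbOn := isAddrCode_rootCode.isAddrEmbOn isAddrCode_childCode fun _ _ => rfl
  labelAt_eq := by
    rintro _ ⟨i, q, rfl⟩ -
    simp [rootCode]

theorem isNodeEmbOn_succ (t : LTree α) (rest : LForest α) :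
    IsNodeEmbOn rest (t :: rest) (List.modifyHead (· + 1)) (codeCone rootCode) where
  isAddrEmbOn := isAddrCode_rootCode.isAddrEmbOn isAddrCode_succCode fun _ _ => rfl
  labelAt_eq := by
    rintro _ ⟨i, q, rfl⟩ -
    simp [rootCode]

theorem isNodeEmbOn_unspliceAddr (a : α) (ts rest : LForest α) :
    IsNodeEmbOn (ts ++ rest) (.node a ts :: rest) (unspliceAddr ts.length)
      (codeCone rootCode) where
  isAddrEmbOn := isAddrCode_rootCode.isAddrEmbOn (isAddrCode_spliceCode _) fun _ _ => rfl
  labelAt_eq := by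
    rintro _ ⟨i, q, rfl⟩ -
    exact labelAt_node_cons_spliceCode_append a ts rest i q

theorem isNodeEmbOn_tail (a : α) (ts rest : LForest α) :
    IsNodeEmbOn (.node a ts :: rest) ts List.tail (codeCone childCode) where
  isAddrEmbOn := isAddrCode_childCode.isAddrEmbOn isAddrCode_rootCode fun _ _ => rfl
  labelAt_eq := by
    rintro _ ⟨i, q, rfl⟩ -
    simp [childCode]

theorem isNodeEmbOn_pred (t : LTree α) (rest : LForest α) :
    IsNodeEmbOn (t :: rest) rest (List.modifyHead (· - 1)) (codeCone succCode) where
  isAddrEmbOn := isAddrCode_succCode.isAddrEmbOn isAddrCode_rootCode fun _ _ => rfl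
  labelAt_eq := by
    rintro _ ⟨i, q, rfl⟩ -
    simp [succCode]

theorem isNodeEmbOn_spliceAddr (a : α) (ts rest : LForest α) :
    IsNodeEmbOn (.node a ts :: rest) (ts ++ rest) (spliceAddr ts.length)
      (codeCone (spliceCode ts.length)) where
  isAddrEmbOn := (isAddrCode_spliceCode _).isAddrEmbOn isAddrCode_rootCode
    (spliceAddr_spliceCode_append _)
  labelAt_eq := by
    rintro _ ⟨i, q, rfl⟩ -
    rw [spliceAddr_spliceCode_append, labelAt_node_cons_spliceCode_append]

theorem Compat.symm {pp qq : List ℕ × List ℕ} (h : Compat pp qq) : Compat qq pp := by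
  have key : ∀ {p q : List ℕ}, p ≠ q → (q < p ↔ ¬ p < q) := fun h =>
    ⟨lt_asymm, fun h' => lt_of_le_of_ne (not_lt.1 h') h.symm⟩
  obtain ⟨h1, h2, h3, h4, h5⟩ := h
  rw [List.lex_lt, List.lex_lt] at h5
  refine ⟨h1.symm, h2.symm, h4, h3, ?_⟩
  rw [List.lex_lt, List.lex_lt, key h1, key h2, h5]

instance : Std.Symm Compat := ⟨fun _ _ => Compat.symm⟩

theorem Compat.map {f g : List ℕ → List ℕ} {P Q : Set (List ℕ)} (hf : IsAddrEmbOn f P)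
    (hg : IsAddrEmbOn g Q) {pp qq : List ℕ × List ℕ} (hp : pp.1 ∈ P ∧ pp.2 ∈ Q)
    (hq : qq.1 ∈ P ∧ qq.2 ∈ Q) (h : Compat pp qq) :
    Compat (Prod.map f g pp) (Prod.map f g qq) := by
  simpa only [Compat, List.lex_lt, Prod.map_fst, Prod.map_snd, ne_eq, (hf hp.1 hq.1).1,
    (hf hp.1 hq.1).2.1, (hf hq.1 hp.1).2.1, (hf hp.1 hq.1).2.2, (hg hp.2 hq.2).1,
    (hg hp.2 hq.2).2.1, (hg hq.2 hp.2).2.1, (hg hp.2 hq.2).2.2] using h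

theorem IsMappingF.nil (F F' : LForest α) : IsMappingF F F' [] :=
  ⟨by simp, List.Pairwise.nil⟩

theorem IsMappingF.eq_nil_of_left {F' : LForest α} {M : List (List ℕ × List ℕ)}
    (hM : IsMappingF [] F' M) : M = [] :=
  List.eq_nil_iff_forall_not_mem.2 fun pr h => by simpa [IsNode] using (hM.1 pr h).1

theorem IsMappingF.eq_nil_of_right {F : LForest α} {M : List (List ℕ × List ℕ)}
    (hM : IsMappingF F [] M) : M = [] :=
  List.eq_nil_iff_forall_not_mem.2 fun pr h => by simpa [IsNode] using (hM.1 pr h).2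

theorem IsMappingF.sublist {F F' : LForest α} {M N : List (List ℕ × List ℕ)}
    (hM : IsMappingF F F' M) (hNM : N.Sublist M) : IsMappingF F F' N :=
  ⟨fun pr h => hM.1 pr (hNM.subset h), hM.2.sublist hNM⟩

theorem IsMappingF.map {F F' G G' : LForest α} {M : List (List ℕ × List ℕ)}
    {f g : List ℕ → List ℕ} {P Q : Set (List ℕ)} (hM : IsMappingF F F' M)
    (hMPQ : ∀ pr ∈ M, pr.1 ∈ P ∧ pr.2 ∈ Q) (hf : IsNodeEmbOn F G f P)
    (hg : IsNodeEmbOn F' G' g Q) : IsMappingF G G' (M.map (Prod.map f g)) := by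
  refine ⟨?_, List.pairwise_map.2 (hM.2.imp_of_mem fun ha hb h =>
    h.map hf.isAddrEmbOn hg.isAddrEmbOn (hMPQ _ ha) (hMPQ _ hb))⟩
  simp only [List.mem_map, forall_exists_index, and_imp]
  rintro _ pr hpr rfl
  refine ⟨?_, ?_⟩
  · simpa [IsNode, hf.labelAt_eq _ (hMPQ pr hpr).1 (hM.1 pr hpr).1] using (hM.1 pr hpr).1
  · simpa [IsNode, hg.labelAt_eq _ (hMPQ pr hpr).2 (hM.1 pr hpr).2] using (hM.1 pr hpr).2

theorem IsMappingF.mem_codeCone_rootCode {F F' : LForest α} {M : List (List ℕ × List ℕ)}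
    (hM : IsMappingF F F' M) (pr : List ℕ × List ℕ) (h : pr ∈ M) :
    pr.1 ∈ codeCone rootCode ∧ pr.2 ∈ codeCone rootCode :=
  ⟨(hM.1 pr h).1.mem_codeCone_rootCode, (hM.1 pr h).2.mem_codeCone_rootCode⟩

theorem compat_root_child {p q : List ℕ} (hp : p ≠ []) (hq : q ≠ []) :
    Compat ([0], [0]) (0 :: p, 0 :: q) := by
  simp [Compat, List.cons_prefix_cons, hp, hq, List.lex_lt, nil_lt_iff]

theorem compat_root_succ (i j : ℕ) (p q : List ℕ) :
    Compat ([0], [0]) ((i + 1) :: p, (j + 1) :: q) := by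
  simp [Compat, List.cons_prefix_cons, List.lex_lt, List.cons_lt_cons_iff]

theorem compat_child_succ (i j : ℕ) (p q p' q' : List ℕ) :
    Compat (0 :: p, 0 :: q) ((i + 1) :: p', (j + 1) :: q') := by
  simp [Compat, List.cons_prefix_cons, List.lex_lt, List.cons_lt_cons_iff]

def joinAtRoots (M₁ M₂ : List (List ℕ × List ℕ)) : List (List ℕ × List ℕ) :=
  ([0], [0]) :: (M₁.map (Prod.map (0 :: ·) (0 :: ·)) ++
    M₂.map (Prod.map (List.modifyHead (· + 1)) (List.modifyHead (· + 1))))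

theorem IsMappingF.joinAtRoots {a b : α} {ts us rest rest' : LForest α}
    {M₁ M₂ : List (List ℕ × List ℕ)} (h₁ : IsMappingF ts us M₁)
    (h₂ : IsMappingF rest rest' M₂) :
    IsMappingF (.node a ts :: rest) (.node b us :: rest') (joinAtRoots M₁ M₂) := by
  have hmap₁ := h₁.map h₁.mem_codeCone_rootCode (isNodeEmbOn_cons_zero a ts rest)
    (isNodeEmbOn_cons_zero b us rest')
  have hmap₂ := h₂.map h₂.mem_codeCone_rootCode (isNodeEmbOn_succ (.node a ts) rest)
    (isNodeEmbOn_succ (.node b us) rest')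
  refine ⟨?_, ?_⟩
  · simp only [Stmt11.joinAtRoots, List.mem_cons, List.mem_append]
    rintro pr (rfl | h | h)
    · simp [IsNode]
    · exact hmap₁.1 pr h
    · exact hmap₂.1 pr h
  · simp only [Stmt11.joinAtRoots, List.pairwise_cons, List.pairwise_append, List.mem_append,
      List.mem_map, Prod.exists, Prod.map_apply]
    refine ⟨?_, hmap₁.2, hmap₂.2, ?_⟩
    · rintro _ (⟨p, q, hpq, rfl⟩ | ⟨p, q, hpq, rfl⟩)
      · exact compat_root_child (h₁.1 _ hpq).1.ne_nil (h₁.1 _ hpq).2.ne_nil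
      · obtain ⟨i, p, rfl⟩ := List.exists_cons_of_ne_nil (h₂.1 _ hpq).1.ne_nil
        obtain ⟨j, q, rfl⟩ := List.exists_cons_of_ne_nil (h₂.1 _ hpq).2.ne_nil
        exact compat_root_succ i j p q
    · rintro _ ⟨p, q, -, rfl⟩ _ ⟨p', q', hpq', rfl⟩
      obtain ⟨i, p', rfl⟩ := List.exists_cons_of_ne_nil (h₂.1 _ hpq').1.ne_nil
      obtain ⟨j, q', rfl⟩ := List.exists_cons_of_ne_nil (h₂.1 _ hpq').2.ne_nil
      exact compat_child_succ i j p q p' q'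

theorem IsMappingF.root_pair_mem {F F' : LForest α} {M : List (List ℕ × List ℕ)}
    (hM : IsMappingF F F' M) (h₁ : ∃ pr ∈ M, pr.1 = [0]) (h₂ : ∃ pr ∈ M, pr.2 = [0]) :
    ([0], [0]) ∈ M := by
  obtain ⟨⟨_, y⟩, hy, rfl⟩ := h₁
  obtain ⟨⟨x, _⟩, hx, rfl⟩ := h₂
  by_contra hroot
  have hy0 : ¬ y <+: [0] := by
    rw [List.prefix_cons_iff]
    rintro (rfl | ⟨t, rfl, ht⟩)
    · exact (hM.1 _ hy).2.ne_nil rfl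
    · exact hroot (by simpa [List.prefix_nil.1 ht] using hy)
  have hxy : ([0], y) ≠ (x, [0]) := by
    rintro ⟨rfl, rfl⟩
    exact hroot hy
  obtain ⟨-, -, hpre, -, hlt⟩ := hM.2.forall hy hx hxy
  rw [List.lex_lt, List.lex_lt] at hlt
  rcases singleton_zero_prefix_or_lt (hM.1 _ hx).1.ne_nil with h | h
  · exact hy0 (hpre.1 h)
  · exact (hM.1 _ hy).2.ne_nil (lt_singleton_zero_iff.1 (hlt.1 h))

theorem Compat.mem_codeCone_childCode_of_root {pr : List ℕ × List ℕ} (h : Compat ([0], [0]) pr)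
    (hpre : [0] <+: pr.1) : pr.1 ∈ codeCone childCode ∧ pr.2 ∈ codeCone childCode := by
  have key : ∀ {p : List ℕ}, [0] <+: p → [0] ≠ p → p ∈ codeCone childCode := by
    rintro _ ⟨_ | ⟨i, q⟩, rfl⟩ hne
    · exact absurd rfl hne
    · exact ⟨i, q, rfl⟩
  exact ⟨key hpre h.1, key (h.2.2.1.1 hpre) h.2.1⟩

theorem Compat.mem_codeCone_succCode_of_root {pr : List ℕ × List ℕ} (h : Compat ([0], [0]) pr)
    (h₁ : pr.1 ≠ []) (h₂ : pr.2 ≠ []) (hpre : ¬ [0] <+: pr.1) :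
    pr.1 ∈ codeCone succCode ∧ pr.2 ∈ codeCone succCode := by
  have key : ∀ {p : List ℕ}, p ≠ [] → ¬ [0] <+: p → p ∈ codeCone succCode := by
    intro p hp hpre
    obtain ⟨_ | i, q, rfl⟩ := List.exists_cons_of_ne_nil hp
    · simp at hpre
    · exact ⟨i, q, rfl⟩
  exact ⟨key h₁ hpre, key h₂ (mt h.2.2.1.2 hpre)⟩

theorem sumCostF_append (c : α → ℤ) (xs ys : LForest α) :
    sumCostF c (xs ++ ys) = sumCostF c xs + sumCostF c ys := by
  induction xs with
  | nil => simp [sumCostF]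
  | cons t ts ih => simp [sumCostF, ih, add_assoc]

theorem fed_nil_right (δ : α → α → ℤ) (δdel δins : α → ℤ) :
    ∀ F : LForest α, fed δ δdel δins F [] = sumCostF δdel F
  | [] => by rw [fed, sumCostF]
  | .node a ts :: rest => by
    rw [fed, fed_nil_right δ δdel δins (ts ++ rest)]
    simp [sumCostF, sumCostT, sumCostF_append, add_assoc]
termination_by F => sizeF F
decreasing_by simp [sizeF, sizeT, sizeF_append]

theorem fed_nil_left (δ : α → α → ℤ) (δdel δins : α → ℤ) :
    ∀ F' : LForest α, fed δ δdel δins [] F' = sumCostF δins F'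
  | [] => by rw [fed, sumCostF]
  | .node b us :: rest' => by
    rw [fed, fed_nil_left δ δdel δins (us ++ rest')]
    simp [sumCostF, sumCostT, sumCostF_append, add_assoc]
termination_by F' => sizeF F'
decreasing_by simp [sizeF, sizeT, sizeF_append]

def simRec (η : α → α → ℤ) : LForest α → LForest α → ℤ
  | [], _ => 0
  | _ :: _, [] => 0
  | .node a ts :: rest, .node b us :: rest' =>
      max (η a b + simRec η ts us + simRec η rest rest')
        (max (simRec η (ts ++ rest) (.node b us :: rest'))
             (simRec η (.node a ts :: rest) (us ++ rest')))
termination_by F G => sizeF F + sizeF G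
decreasing_by all_goals simp [sizeF, sizeT, sizeF_append] <;> omega

@[simp] theorem simRec_nil_left (η : α → α → ℤ) (F' : LForest α) :
    simRec η [] F' = 0 := by
  rw [simRec]

@[simp] theorem simRec_nil_right (η : α → α → ℤ) (F : LForest α) :
    simRec η F [] = 0 := by
  cases F <;> rw [simRec]

theorem simRec_eq_sumCostF_sub_fed (δ : α → α → ℤ) (δdel δins : α → ℤ) :
    ∀ F F' : LForest α, simRec (fun a b => δdel a + δins b - δ a b) F F' =
      sumCostF δdel F + sumCostF δins F' - fed δ δdel δins F F'
  | [], F' => by simp [fed_nil_left, sumCostF]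
  | _ :: _, [] => by simp [fed_nil_right, sumCostF]
  | .node a ts :: rest, .node b us :: rest' => by
    rw [simRec, fed, simRec_eq_sumCostF_sub_fed δ δdel δins ts us,
      simRec_eq_sumCostF_sub_fed δ δdel δins rest rest',
      simRec_eq_sumCostF_sub_fed δ δdel δins (ts ++ rest) _,
      simRec_eq_sumCostF_sub_fed δ δdel δins _ (us ++ rest')]
    simp only [sumCostF, sumCostT, sumCostF_append]
    omega
termination_by F F' => sizeF F + sizeF F'
decreasing_by all_goals simp [sizeF, sizeT, sizeF_append] <;> omega

section Weights

variable [Inhabited α] (η : α → α → ℤ)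

@[simp] theorem wtF_nil (F F' : LForest α) : wtF η F F' [] = 0 := rfl

@[simp] theorem wtF_cons (F F' : LForest α) (pr : List ℕ × List ℕ)
    (M : List (List ℕ × List ℕ)) :
    wtF η F F' (pr :: M) =
      η ((labelAt F pr.1).getD default) ((labelAt F' pr.2).getD default) + wtF η F F' M := by
  simp [wtF]

@[simp] theorem wtF_append (F F' : LForest α) (M N : List (List ℕ × List ℕ)) :
    wtF η F F' (M ++ N) = wtF η F F' M + wtF η F F' N := by
  simp [wtF]

theorem wtF_perm (F F' : LForest α) {M N : List (List ℕ × List ℕ)} (h : M.Perm N) :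
    wtF η F F' M = wtF η F F' N :=
  (h.map _).sum_eq

theorem wtF_map {F F' G G' : LForest α} {M : List (List ℕ × List ℕ)}
    {f g : List ℕ → List ℕ} {P Q : Set (List ℕ)} (hM : IsMappingF F F' M)
    (hMPQ : ∀ pr ∈ M, pr.1 ∈ P ∧ pr.2 ∈ Q) (hf : IsNodeEmbOn F G f P)
    (hg : IsNodeEmbOn F' G' g Q) : wtF η G G' (M.map (Prod.map f g)) = wtF η F F' M := by
  rw [wtF, wtF, List.map_map]
  congr 1
  refine List.map_congr_left fun pr hpr => ?_
  simp [hf.labelAt_eq _ (hMPQ pr hpr).1 (hM.1 pr hpr).1,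
    hg.labelAt_eq _ (hMPQ pr hpr).2 (hM.1 pr hpr).2]

theorem wtF_joinAtRoots {a b : α} {ts us rest rest' : LForest α}
    {M₁ M₂ : List (List ℕ × List ℕ)} (h₁ : IsMappingF ts us M₁)
    (h₂ : IsMappingF rest rest' M₂) :
    wtF η (.node a ts :: rest) (.node b us :: rest') (joinAtRoots M₁ M₂) =
      η a b + wtF η ts us M₁ + wtF η rest rest' M₂ := by
  rw [Stmt11.joinAtRoots, wtF_cons, wtF_append,
    wtF_map η h₁ h₁.mem_codeCone_rootCode (isNodeEmbOn_cons_zero a ts rest)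
      (isNodeEmbOn_cons_zero b us rest'),
    wtF_map η h₂ h₂.mem_codeCone_rootCode (isNodeEmbOn_succ (.node a ts) rest)
      (isNodeEmbOn_succ (.node b us) rest')]
  simp [add_assoc]

theorem IsMappingF.exists_of_isNodeEmbOn {F F' G G' : LForest α}
    {M : List (List ℕ × List ℕ)} {f g : List ℕ → List ℕ} {P Q : Set (List ℕ)}
    (hM : IsMappingF F F' M) (hMPQ : ∀ pr ∈ M, pr.1 ∈ P ∧ pr.2 ∈ Q)
    (hf : IsNodeEmbOn F G f P) (hg : IsNodeEmbOn F' G' g Q) :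
    ∃ N, IsMappingF G G' N ∧ wtF η G G' N = wtF η F F' M :=
  ⟨_, hM.map hMPQ hf hg, wtF_map η hM hMPQ hf hg⟩

theorem IsMappingF.exists_split_at_root {a b : α} {ts us rest rest' : LForest α}
    {M : List (List ℕ × List ℕ)} (hM : IsMappingF (.node a ts :: rest) (.node b us :: rest') M)
    (hroot : ([0], [0]) ∈ M) :
    ∃ M₁ M₂, IsMappingF ts us M₁ ∧ IsMappingF rest rest' M₂ ∧
      wtF η (.node a ts :: rest) (.node b us :: rest') M =
        η a b + wtF η ts us M₁ + wtF η rest rest' M₂ := by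
  classical
  set M₀ := M.erase ([0], [0])
  have hperm : M.Perm (([0], [0]) :: M₀) := List.perm_cons_erase hroot
  have hcompat : ∀ pr ∈ M₀, Compat ([0], [0]) pr :=
    (List.pairwise_cons.1 ((hperm.pairwise_iff Compat.symm).1 hM.2)).1
  have hM₀ : IsMappingF _ _ M₀ := hM.sublist List.erase_sublist
  obtain ⟨M₁, hM₁, hw₁⟩ := (hM₀.sublist List.filter_sublist).exists_of_isNodeEmbOn η
    (M := M₀.filter fun pr => [0] <+: pr.1)
    (fun pr h => by
      rw [List.mem_filter, decide_eq_true_iff] at h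
      exact (hcompat pr h.1).mem_codeCone_childCode_of_root h.2)
    (isNodeEmbOn_tail a ts rest) (isNodeEmbOn_tail b us rest')
  obtain ⟨M₂, hM₂, hw₂⟩ := (hM₀.sublist List.filter_sublist).exists_of_isNodeEmbOn η
    (M := M₀.filter fun pr => ¬ [0] <+: pr.1)
    (fun pr h => by
      rw [List.mem_filter, decide_eq_true_iff] at h
      exact (hcompat pr h.1).mem_codeCone_succCode_of_root (hM₀.1 pr h.1).1.ne_nil
        (hM₀.1 pr h.1).2.ne_nil h.2)
    (isNodeEmbOn_pred (.node a ts) rest) (isNodeEmbOn_pred (.node b us) rest')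
  refine ⟨M₁, M₂, hM₁, hM₂, ?_⟩
  rw [wtF_perm η _ _ hperm, wtF_cons, hw₁, hw₂, wtF_perm η _ _
    (List.filter_append_perm (fun pr => decide ([0] <+: pr.1)) M₀).symm, wtF_append]
  simp [add_assoc]

theorem exists_isMappingF_wtF_eq_simRec :
    ∀ F F' : LForest α, ∃ M, IsMappingF F F' M ∧ wtF η F F' M = simRec η F F'
  | [], _ => ⟨[], .nil _ _, by simp⟩
  | _ :: _, [] => ⟨[], .nil _ _, by simp⟩
  | .node a ts :: rest, .node b us :: rest' => by
    obtain ⟨M₁, h₁, hw₁⟩ := exists_isMappingF_wtF_eq_simRec ts us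
    obtain ⟨M₂, h₂, hw₂⟩ := exists_isMappingF_wtF_eq_simRec rest rest'
    obtain ⟨M₃, h₃, hw₃⟩ :=
      exists_isMappingF_wtF_eq_simRec (ts ++ rest) (.node b us :: rest')
    obtain ⟨M₄, h₄, hw₄⟩ :=
      exists_isMappingF_wtF_eq_simRec (.node a ts :: rest) (us ++ rest')
    have hdel := hw₃ ▸ h₃.exists_of_isNodeEmbOn η
      (fun pr h => ⟨(h₃.1 pr h).1.mem_codeCone_rootCode, Set.mem_univ _⟩)
      (isNodeEmbOn_unspliceAddr a ts rest) (isNodeEmbOn_id _)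
    have hins := hw₄ ▸ h₄.exists_of_isNodeEmbOn η
      (fun pr h => ⟨Set.mem_univ _, (h₄.1 pr h).2.mem_codeCone_rootCode⟩)
      (isNodeEmbOn_id _) (isNodeEmbOn_unspliceAddr b us rest')
    rw [simRec]
    rcases max_choice (η a b + simRec η ts us + simRec η rest rest') (max _ _) with h | h <;>
      rw [h]
    · exact ⟨_, h₁.joinAtRoots h₂, by rw [wtF_joinAtRoots η h₁ h₂, hw₁, hw₂]⟩
    · rcases max_choice (simRec η (ts ++ rest) _) _ with h | h <;> rw [h]
      exacts [hdel, hins]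
termination_by F F' => sizeF F + sizeF F'
decreasing_by all_goals simp [sizeF, sizeT, sizeF_append] <;> omega

theorem wtF_le_simRec : ∀ (F F' : LForest α) (M : List (List ℕ × List ℕ)),
    IsMappingF F F' M → wtF η F F' M ≤ simRec η F F'
  | [], _, M, hM => by simp [hM.eq_nil_of_left]
  | _ :: _, [], M, hM => by simp [hM.eq_nil_of_right]
  | .node a ts :: rest, .node b us :: rest', M, hM => by
    rw [simRec]
    by_cases h₁ : ∀ pr ∈ M, pr.1 ≠ [0]
    · obtain ⟨N, hN, hw⟩ := hM.exists_of_isNodeEmbOn η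
        (fun pr h => ⟨(hM.1 pr h).1.mem_codeCone_spliceCode (h₁ pr h), Set.mem_univ _⟩)
        (isNodeEmbOn_spliceAddr a ts rest) (isNodeEmbOn_id _)
      have := wtF_le_simRec (ts ++ rest) (.node b us :: rest') N hN
      exact le_max_of_le_right (le_max_of_le_left (hw ▸ this))
    by_cases h₂ : ∀ pr ∈ M, pr.2 ≠ [0]
    · obtain ⟨N, hN, hw⟩ := hM.exists_of_isNodeEmbOn η
        (fun pr h => ⟨Set.mem_univ _, (hM.1 pr h).2.mem_codeCone_spliceCode (h₂ pr h)⟩)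
        (isNodeEmbOn_id _) (isNodeEmbOn_spliceAddr b us rest')
      have := wtF_le_simRec (.node a ts :: rest) (us ++ rest') N hN
      exact le_max_of_le_right (le_max_of_le_right (hw ▸ this))
    push Not at h₁ h₂
    obtain ⟨M₁, M₂, hM₁, hM₂, hw⟩ :=
      hM.exists_split_at_root η (hM.root_pair_mem h₁ h₂)
    have := wtF_le_simRec ts us M₁ hM₁
    have := wtF_le_simRec rest rest' M₂ hM₂
    exact le_max_of_le_left (by omega)
termination_by F F' => sizeF F + sizeF F'
decreasing_by all_goals simp [sizeF, sizeT, sizeF_append] <;> omega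

theorem isGreatest_simSetF (F F' : LForest α) : IsGreatest (simSetF η F F') (simRec η F F') := by
  obtain ⟨M, hM, hw⟩ := exists_isMappingF_wtF_eq_simRec η F F'
  exact ⟨⟨M, hM, hw.symm⟩, by rintro _ ⟨N, hN, rfl⟩; exact wtF_le_simRec η F F' N hN⟩

end Weights

end Forests

/-- forest similarity and tree edit distance are complementary:
`sim(F, F') = Σ_{v ∈ F} δ(v,ε) + Σ_{v' ∈ F'} δ(ε,v') - ed(F, F')`, where
`η(v,v') = δ(v,ε) + δ(ε,v') - δ(v,v')`. -/
theorem stmt11 {α : Type*} [Inhabited α] (δ : α → α → ℤ) (δdel δins : α → ℤ)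
    (hsub : ∀ a b, δ a b ≤ δdel a + δins b)
    (hdiag : ∀ a, δ a a = 0)
    (hδnn : ∀ a b, 0 ≤ δ a b) (hdelnn : ∀ a, 0 ≤ δdel a) (hinsnn : ∀ b, 0 ≤ δins b)
    (F F' : LForest α) (S : ℤ)
    (hS : IsGreatest (simSetF (fun a b => δdel a + δins b - δ a b) F F') S) :
    S = sumCostF δdel F + sumCostF δins F' - fed δ δdel δins F F' := by
  rw [← simRec_eq_sumCostF_sub_fed]
  exact hS.unique (isGreatest_simSetF _ F F')

end Stmt11
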